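/- (Wood's theorem, planar case, converse implication) Let φ₁,…,φ_N be holomorphic functions on a disc D ⊆ ℂ with pairwise distinct values at each point (or more generally distinct as germs), and suppose that for every l ≥ 1 the power sum Σ_j φ_j(x)^l is a polynomial in x of degree at most l. Then there exists a polynomial f ∈ ℂ[x,y] of total degree N, monic of degree N in y, such that f(x, φ_j(x)) ≡ 0 for all j. -/

import Mathlib

open Polynomial

/-!
The coefficient of `Y ^ (N - k)` in `∏ j, (Y - φ j x)` is `(-1) ^ k * e k (φ · x)`, and Newton's
identities `k * e k = ± ∑_{a + b = k, a < k} ± e a * p b` express the elementary symmetric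
functions `e` through the power sums `p`. Functions agreeing on the disc with a polynomial of
degree `≤ n` form a multiplicative filtration, so induction on `k` shows that `x ↦ e k (φ · x)`
agrees with a polynomial of degree `≤ k`; these polynomials are the coefficients of `f`.
-/

open MvPolynomial (esymm psum)
open Finset

section degreeLEOn

variable {K : Type*} [CommRing K]

def degreeLEOn (s : Set K) (n : ℕ) : Submodule K (K → K) where
  carrier := {g | ∃ P ∈ degreeLE K n, Set.EqOn g (fun x => P.eval x) s}
  add_mem' := by
    rintro _ _ ⟨P, hP, hPg⟩ ⟨Q, hQ, hQh⟩
    exact ⟨P + Q, add_mem hP hQ, fun x hx => by simp [hPg hx, hQh hx]⟩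
  zero_mem' := ⟨0, zero_mem _, fun x _ => by simp⟩
  smul_mem' := by
    rintro c _ ⟨P, hP, hPg⟩
    exact ⟨c • P, Submodule.smul_mem _ c hP, fun x hx => by simp [hPg hx]⟩

variable {s : Set K} {m n : ℕ} {g h : K → K}

theorem one_mem_degreeLEOn : (1 : K → K) ∈ degreeLEOn s 0 :=
  ⟨1, mem_degreeLE.2 degree_one_le, fun x _ => by simp⟩

theorem neg_one_pow_mem_degreeLEOn (k : ℕ) : (-1 : K → K) ^ k ∈ degreeLEOn s 0 := by
  rcases neg_one_pow_eq_or (K → K) k with h | h <;> rw [h]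
  exacts [one_mem_degreeLEOn, neg_mem one_mem_degreeLEOn]

theorem mul_mem_degreeLEOn (hg : g ∈ degreeLEOn s m) (hh : h ∈ degreeLEOn s n) :
    g * h ∈ degreeLEOn s (m + n) := by
  obtain ⟨P, hP, hPg⟩ := hg
  obtain ⟨Q, hQ, hQh⟩ := hh
  refine ⟨P * Q, mem_degreeLE.2 ?_, fun x hx => by simp [hPg hx, hQh hx]⟩
  calc (P * Q).degree ≤ P.degree + Q.degree := degree_mul_le P Q
    _ ≤ m + n := add_le_add (mem_degreeLE.1 hP) (mem_degreeLE.1 hQ)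
    _ = ↑(m + n) := by norm_cast

end degreeLEOn

theorem MvPolynomial.aeval_pi_apply {R ι A X : Type*} [CommSemiring R] [CommSemiring A]
    [Algebra R A] (φ : ι → X → A) (p : MvPolynomial ι R) (x : X) :
    MvPolynomial.aeval φ p x = MvPolynomial.aeval (fun i => φ i x) p :=
  DFunLike.congr_fun (MvPolynomial.comp_aeval φ (Pi.evalAlgHom R (fun _ => A) x)) p

section symmetricFunctions

variable {K ι : Type*} [Field K] [CharZero K] [Fintype ι] {s : Set K} (φ : ι → K → K)

theorem aeval_esymm_mem_degreeLEOn
    (hpsum : ∀ l, 1 ≤ l → MvPolynomial.aeval φ (psum ι K l) ∈ degreeLEOn s l) (k : ℕ) :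
    MvPolynomial.aeval φ (esymm ι K k) ∈ degreeLEOn s k := by
  induction k using Nat.strong_induction_on with
  | _ k ih =>
    rcases Nat.eq_zero_or_pos k with rfl | hk
    · simpa using one_mem_degreeLEOn
    have newton := congrArg (MvPolynomial.aeval φ) (MvPolynomial.mul_esymm_eq_sum ι K k)
    simp only [map_mul, map_natCast, map_pow, map_neg, map_one, map_sum] at newton
    have hk0 : (k : K) ≠ 0 := Nat.cast_ne_zero.2 hk.ne'
    have hdiv : MvPolynomial.aeval φ (esymm ι K k) =
        (k : K)⁻¹ • ((k : K → K) * MvPolynomial.aeval φ (esymm ι K k)) := by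
      rw [← nsmul_eq_mul, ← Nat.cast_smul_eq_nsmul K, smul_smul, inv_mul_cancel₀ hk0, one_smul]
    rw [hdiv, newton]
    refine Submodule.smul_mem _ _ ?_
    have hsum : ∑ a ∈ antidiagonal k with a.1 < k,
        (-1) ^ a.1 * MvPolynomial.aeval φ (esymm ι K a.1) * MvPolynomial.aeval φ (psum ι K a.2)
          ∈ degreeLEOn s k := by
      refine Submodule.sum_mem _ fun a ha => ?_
      rw [mem_filter, HasAntidiagonal.mem_antidiagonal] at ha
      have := mul_mem_degreeLEOn
        (mul_mem_degreeLEOn (neg_one_pow_mem_degreeLEOn a.1) (ih a.1 ha.2)) (hpsum a.2 (by omega))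
      rwa [zero_add, ha.1] at this
    simpa using mul_mem_degreeLEOn (neg_one_pow_mem_degreeLEOn (k + 1)) hsum

theorem coeff_prod_X_sub_C_mem_degreeLEOn
    (hpsum : ∀ l, 1 ≤ l → MvPolynomial.aeval φ (psum ι K l) ∈ degreeLEOn s l) (k : ℕ) :
    (fun x => (∏ j, (X - C (φ j x))).coeff k) ∈ degreeLEOn s (Fintype.card ι - k) := by
  by_cases hk : k ≤ Fintype.card ι
  · convert Submodule.smul_mem _ ((-1 : K) ^ (Fintype.card ι - k))
      (aeval_esymm_mem_degreeLEOn φ hpsum _) using 1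
    ext x
    have hcard : (univ.val.map (φ · x)).card = Fintype.card ι := by simp
    have hmap : univ.val.map (fun j => X - C (φ j x)) =
        (univ.val.map (φ · x)).map (fun t => X - C t) := by
      rw [Multiset.map_map]; rfl
    rw [prod_eq_multiset_prod, hmap, Multiset.prod_X_sub_C_coeff _ (hcard ▸ hk), hcard,
      Pi.smul_apply, MvPolynomial.aeval_pi_apply, MvPolynomial.aeval_esymm_eq_multiset_esymm,
      smul_eq_mul]
  · convert (degreeLEOn s _).zero_mem using 1
    ext x
    exact coeff_eq_zero_of_natDegree_lt (by simpa using hk)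

end symmetricFunctions

theorem exists_monic_map_evalRingHom_eq {K : Type*} [CommRing K] [Nontrivial K] {s : Set K}
    {N : ℕ} (g : K → K[X]) (hmonic : ∀ x ∈ s, (g x).Monic)
    (hdeg : ∀ x ∈ s, (g x).natDegree = N)
    (hcoeff : ∀ k, (fun x => (g x).coeff k) ∈ degreeLEOn s (N - k)) :
    ∃ f : K[X][X], f.Monic ∧ f.natDegree = N ∧ (∀ k, (f.coeff k).natDegree ≤ N - k) ∧
      ∀ x ∈ s, f.map (evalRingHom x) = g x := by
  choose Q hQ hQg using hcoeff
  set p := ∑ k ∈ range N, C (Q k) * X ^ k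
  have hp : p.degree < N := by
    simpa only [p, Fin.sum_univ_eq_sum_range (fun k => C (Q k) * X ^ k)] using
      degree_sum_fin_lt (fun i : Fin N => Q i)
  refine ⟨X ^ N + p, monic_X_pow_add hp, ?_, fun k => ?_, fun x hx => ?_⟩
  · rw [natDegree_add_eq_left_of_degree_lt (by rwa [degree_X_pow]), natDegree_X_pow]
  · simp only [p, coeff_add, coeff_X_pow, finsetSum_coeff, coeff_C_mul_X_pow, sum_ite_eq,
      mem_range]
    have := natDegree_le_iff_degree_le.2 (mem_degreeLE.1 (hQ k))
    split_ifs <;> simp_all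
  · conv_rhs => rw [(hmonic x hx).as_sum, hdeg x hx]
    simp only [p, Polynomial.map_add, Polynomial.map_pow, map_X, Polynomial.map_sum,
      Polynomial.map_mul, map_C, coe_evalRingHom]
    congr 1
    exact sum_congr rfl fun k _ => congrArg (C · * X ^ k) (hQg k hx).symm

theorem wood_planar_converse_general
    (N : ℕ)
    (z₀ : ℂ) (r : ℝ)
    (φ : Fin N → ℂ → ℂ)
    (hps : ∀ l : ℕ, 1 ≤ l → ∃ P : Polynomial ℂ, P.degree ≤ (l : ℕ) ∧
      ∀ x ∈ Metric.ball z₀ r, (∑ j : Fin N, φ j x ^ l) = P.eval x) :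
    ∃ f : Polynomial (Polynomial ℂ), f.Monic ∧ f.natDegree = N ∧
      (∀ k : ℕ, (f.coeff k).natDegree ≤ N - k) ∧
      ∀ j : Fin N, ∀ x ∈ Metric.ball z₀ r,
        (f.map (Polynomial.evalRingHom x)).eval (φ j x) = 0 := by
  have hpsum : ∀ l, 1 ≤ l →
      MvPolynomial.aeval φ (psum (Fin N) ℂ l) ∈ degreeLEOn (Metric.ball z₀ r) l := by
    intro l hl
    obtain ⟨P, hP, hPφ⟩ := hps l hl
    exact ⟨P, mem_degreeLE.2 hP, fun x hx => by
      simpa [MvPolynomial.aeval_pi_apply, MvPolynomial.psum] using hPφ x hx⟩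
  obtain ⟨f, hmonic, hdeg, hcoeff, hmap⟩ :=
    exists_monic_map_evalRingHom_eq (N := N) (fun x => ∏ j, (X - C (φ j x)))
      (fun x _ => monic_prod_of_monic _ _ fun j _ => monic_X_sub_C (φ j x)) (fun x _ => by simp)
      (by simpa using coeff_prod_X_sub_C_mem_degreeLEOn φ hpsum)
  refine ⟨f, hmonic, hdeg, hcoeff, fun j x hx => ?_⟩
  rw [hmap x hx, eval_prod]
  exact prod_eq_zero (mem_univ j) (by simp)

/-- Wood's theorem, planar case, converse implication.  If `φ 1, …, φ N` are holomorphic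
on a disc, with pairwise distinct values at each point, and all power sums
`x ↦ ∑ j, φ j x ^ l` agree with polynomials of degree `≤ l`, then there is a polynomial
`f ∈ ℂ[x][y]`, monic of degree `N` in `y` and of total degree `N`, vanishing on all the
graphs `y = φ j x`. -/
theorem wood_planar_converse
    (N : ℕ)
    (z₀ : ℂ) (r : ℝ) (hr : 0 < r)
    (φ : Fin N → ℂ → ℂ)
    (hφ : ∀ j, DifferentiableOn ℂ (φ j) (Metric.ball z₀ r))
    (hdist : ∀ x ∈ Metric.ball z₀ r, ∀ j k : Fin N, j ≠ k → φ j x ≠ φ k x)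
    (hps : ∀ l : ℕ, 1 ≤ l → ∃ P : Polynomial ℂ, P.degree ≤ (l : ℕ) ∧
      ∀ x ∈ Metric.ball z₀ r, (∑ j : Fin N, φ j x ^ l) = P.eval x) :
    ∃ f : Polynomial (Polynomial ℂ), f.Monic ∧ f.natDegree = N ∧
      (∀ k : ℕ, (f.coeff k).natDegree ≤ N - k) ∧
      ∀ j : Fin N, ∀ x ∈ Metric.ball z₀ r,
        (f.map (Polynomial.evalRingHom x)).eval (φ j x) = 0 :=
  wood_planar_converse_general N z₀ r φ hps
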